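/- Define, for real α_0, α_1, α_2, α_3 > 0 with α_4 := 1 − α_0 − α_1 − α_2 − α_3 > 0 and c = 4, b(c, α_0, α_1, α_2, α_3) = (∏_{i=0}^{4} α_i^{−α_i}) · e^{c(α_0 α_4 − 1/2)} · (e^{cα_0}−1)^{α_1} (e^{cα_1}−1)^{α_2} (e^{cα_2}−1)^{α_3} (e^{cα_3}−1)^{α_4} · (1 − e^{−α_3/α_2} e^{−cα_3})^{α_2}. Then at every point with 0.06 ≤ α_i ≤ 0.6 for i = 0,1,2,3,4, the logarithmic partial derivatives satisfy |(1/b)·∂b/∂α_i| < 30 for each i = 0,1,2,3 (where b is viewed as a function of α_0, α_1, α_2, α_3 with α_4 = 1 − α_0 − α_1 − α_2 − α_3). -/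

import Mathlib

/-!
On the open simplex `b = exp F`, where `F = log b` is an explicit sum of entropy terms
`-αᵢ log αᵢ`, a quadratic, terms `αⱼ log (e^{4αᵢ} - 1)` and `α₂ log (1 - e^{-x})` with
`x = α₃/α₂ + 4α₃`; hence `(1/b) ∂b/∂αᵢ = ∂F/∂αᵢ`. Each partial derivative is then controlled by
`log αᵢ ∈ [-3, 0]`, `log (e^y - 1) ∈ [1 - q, y]`, `log (1 - e^{-y}) ∈ [-q, 0]` and
`0 < q = (e^y - 1)⁻¹ ≤ 1/y`. The only large contributions are `αⱼ q(4αᵢ) ≤ αⱼ/(4αᵢ)`; in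
`∂F/∂α₃` the two of them, `4α₄ q(4α₃)` and `(1 + 4α₂) q(x)`, add up to at most `(α₄ + α₂)/α₃ ≤ 14`.
-/
/-- The function `b(4, α₀, α₁, α₂, α₃)` from the first-moment bound for homomorphisms of
`G_{n,4/n}` to `C₅`, with `c = 4` and `α₄ = 1 - α₀ - α₁ - α₂ - α₃`. -/
noncomputable def bfun (a0 a1 a2 a3 : ℝ) : ℝ :=
  let c : ℝ := 4
  let a4 : ℝ := 1 - a0 - a1 - a2 - a3
  a0 ^ (-a0) * a1 ^ (-a1) * a2 ^ (-a2) * a3 ^ (-a3) * a4 ^ (-a4) *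
    Real.exp (c * (a0 * a4 - 1 / 2)) *
    (Real.exp (c * a0) - 1) ^ a1 * (Real.exp (c * a1) - 1) ^ a2 *
    (Real.exp (c * a2) - 1) ^ a3 * (Real.exp (c * a3) - 1) ^ a4 *
    (1 - Real.exp (-a3 / a2) * Real.exp (-c * a3)) ^ a2

open Real Filter Topology Set

section ExpSubOne

variable {y : ℝ}

theorem exp_sub_one_pos (hy : 0 < y) : 0 < exp y - 1 :=
  sub_pos.2 (one_lt_exp_iff.2 hy)

theorem mul_inv_exp_sub_one_le_one (hy : 0 < y) : y * (exp y - 1)⁻¹ ≤ 1 := by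
  rw [← div_eq_mul_inv, div_le_one (exp_sub_one_pos hy)]
  linarith [add_one_le_exp y]

theorem log_exp_sub_one_le (hy : 0 < y) : log (exp y - 1) ≤ y :=
  calc log (exp y - 1) ≤ log (exp y) := log_le_log (exp_sub_one_pos hy) (by linarith)
    _ = y := log_exp y

theorem one_sub_inv_exp_sub_one_le_log (hy : 0 < y) : 1 - (exp y - 1)⁻¹ ≤ log (exp y - 1) :=
  one_sub_inv_le_log_of_pos (exp_sub_one_pos hy)

theorem one_sub_exp_neg_pos (hy : 0 < y) : 0 < 1 - exp (-y) :=
  sub_pos.2 (exp_lt_one_iff.2 (neg_neg_of_pos hy))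

theorem log_one_sub_exp_neg_nonpos (hy : 0 ≤ y) : log (1 - exp (-y)) ≤ 0 :=
  log_nonpos (by linarith [exp_le_one_iff.2 (neg_nonpos.2 hy)]) (by linarith [exp_pos (-y)])

theorem neg_inv_exp_sub_one_le_log_one_sub_exp_neg (hy : 0 < y) :
    -(exp y - 1)⁻¹ ≤ log (1 - exp (-y)) := by
  have h := one_sub_inv_le_log_of_pos (one_sub_exp_neg_pos hy)
  have hinv : 1 - (1 - exp (-y))⁻¹ = -(exp y - 1)⁻¹ := by
    have := (exp_sub_one_pos hy).ne'
    rw [exp_neg]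
    field_simp
    ring
  linarith

end ExpSubOne

noncomputable def logB (a0 a1 a2 a3 : ℝ) : ℝ :=
  let a4 := 1 - a0 - a1 - a2 - a3
  negMulLog a0 + negMulLog a1 + negMulLog a2 + negMulLog a3 + negMulLog a4 +
    4 * (a0 * a4 - 1 / 2) +
    a1 * log (exp (4 * a0) - 1) + a2 * log (exp (4 * a1) - 1) +
    a3 * log (exp (4 * a2) - 1) + a4 * log (exp (4 * a3) - 1) +
    a2 * log (1 - exp (-(a3 / a2 + 4 * a3)))

theorem bfun_eq_exp_logB {a0 a1 a2 a3 : ℝ} (h0 : 0 < a0) (h1 : 0 < a1) (h2 : 0 < a2)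
    (h3 : 0 < a3) (h4 : 0 < 1 - a0 - a1 - a2 - a3) :
    bfun a0 a1 a2 a3 = exp (logB a0 a1 a2 a3) := by
  have hx : exp (-a3 / a2) * exp (-4 * a3) = exp (-(a3 / a2 + 4 * a3)) := by
    rw [← exp_add]; ring_nf
  have hT := one_sub_exp_neg_pos (by positivity : 0 < a3 / a2 + 4 * a3)
  simp only [bfun, logB, hx]
  rw [rpow_def_of_pos h0, rpow_def_of_pos h1, rpow_def_of_pos h2, rpow_def_of_pos h3,
    rpow_def_of_pos h4, rpow_def_of_pos (exp_sub_one_pos (by positivity)),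
    rpow_def_of_pos (exp_sub_one_pos (by positivity)),
    rpow_def_of_pos (exp_sub_one_pos (by positivity)),
    rpow_def_of_pos (exp_sub_one_pos (by positivity)), rpow_def_of_pos hT]
  simp only [← exp_add, negMulLog]
  ring_nf

theorem inv_mul_deriv_eq_deriv_of_eventuallyEq_exp {f F : ℝ → ℝ} {x : ℝ}
    (hF : DifferentiableAt ℝ F x) (hf : f =ᶠ[𝓝 x] fun t => exp (F t)) :
    (f x)⁻¹ * deriv f x = deriv F x := by
  rw [hf.deriv_eq, hF.hasDerivAt.exp.deriv, hf.eq_of_nhds, inv_mul_cancel_left₀ (exp_ne_zero _)]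

section Partials

variable {a0 a1 a2 a3 : ℝ}

theorem hasDerivAt_logB_a0 (h0 : 0 < a0) (h4 : 0 < 1 - a0 - a1 - a2 - a3) :
    HasDerivAt (fun t => logB t a1 a2 a3)
      (log (1 - a0 - a1 - a2 - a3) - log a0 + 4 * (1 - a0 - a1 - a2 - a3 - a0) +
        4 * a1 * (1 + (exp (4 * a0) - 1)⁻¹) - log (exp (4 * a3) - 1)) a0 := by
  have hq := (exp_sub_one_pos (by positivity : 0 < 4 * a0)).ne'
  apply HasDerivAt.congr_deriv
  · simp only [logB]
    apply_rules (maxDepth := 200) [hasDerivAt_const, hasDerivAt_id', HasDerivAt.fun_add,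
      HasDerivAt.fun_sub, HasDerivAt.fun_neg, HasDerivAt.fun_mul, HasDerivAt.log, HasDerivAt.exp]
    all_goals exact ne_of_gt ‹_›
  · -- with the exponential as an atom, `field_simp` can use its nonvanishing
    generalize exp (4 * a0) = e at hq ⊢
    field_simp
    ring

theorem hasDerivAt_logB_a1 (h1 : 0 < a1) (h4 : 0 < 1 - a0 - a1 - a2 - a3) :
    HasDerivAt (fun t => logB a0 t a2 a3)
      (log (1 - a0 - a1 - a2 - a3) - log a1 - 4 * a0 + log (exp (4 * a0) - 1) +
        4 * a2 * (1 + (exp (4 * a1) - 1)⁻¹) - log (exp (4 * a3) - 1)) a1 := by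
  have hq := (exp_sub_one_pos (by positivity : 0 < 4 * a1)).ne'
  apply HasDerivAt.congr_deriv
  · simp only [logB]
    apply_rules (maxDepth := 200) [hasDerivAt_const, hasDerivAt_id', HasDerivAt.fun_add,
      HasDerivAt.fun_sub, HasDerivAt.fun_neg, HasDerivAt.fun_mul, HasDerivAt.log, HasDerivAt.exp]
    all_goals exact ne_of_gt ‹_›
  · generalize exp (4 * a1) = e at hq ⊢
    field_simp
    ring

theorem hasDerivAt_logB_a2 (h2 : 0 < a2) (h3 : 0 < a3) (h4 : 0 < 1 - a0 - a1 - a2 - a3) :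
    HasDerivAt (fun t => logB a0 a1 t a3)
      (log (1 - a0 - a1 - a2 - a3) - log a2 - 4 * a0 + log (exp (4 * a1) - 1) +
        4 * a3 * (1 + (exp (4 * a2) - 1)⁻¹) - log (exp (4 * a3) - 1) +
        log (1 - exp (-(a3 / a2 + 4 * a3))) - a3 / a2 * (exp (a3 / a2 + 4 * a3) - 1)⁻¹) a2 := by
  have hx : 0 < a3 / a2 + 4 * a3 := by positivity
  have hq := (exp_sub_one_pos (by positivity : 0 < 4 * a2)).ne'
  have hQ := (exp_sub_one_pos hx).ne'
  have hT := one_sub_exp_neg_pos hx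
  apply HasDerivAt.congr_deriv
  · simp only [logB]
    apply_rules (maxDepth := 200) [hasDerivAt_const, hasDerivAt_id', HasDerivAt.fun_add,
      HasDerivAt.fun_sub, HasDerivAt.fun_neg, HasDerivAt.fun_div, HasDerivAt.fun_mul,
      HasDerivAt.log, HasDerivAt.exp]
    all_goals exact ne_of_gt ‹_›
  · have hE := exp_ne_zero (a3 / a2 + 4 * a3)
    rw [exp_neg]
    generalize exp (4 * a2) = e at hq ⊢
    generalize exp (a3 / a2 + 4 * a3) = E at hE hQ ⊢
    field_simp
    ring

theorem hasDerivAt_logB_a3 (h2 : 0 < a2) (h3 : 0 < a3) (h4 : 0 < 1 - a0 - a1 - a2 - a3) :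
    HasDerivAt (fun t => logB a0 a1 a2 t)
      (log (1 - a0 - a1 - a2 - a3) - log a3 - 4 * a0 + log (exp (4 * a2) - 1) -
        log (exp (4 * a3) - 1) + 4 * (1 - a0 - a1 - a2 - a3) * (1 + (exp (4 * a3) - 1)⁻¹) +
        (1 + 4 * a2) * (exp (a3 / a2 + 4 * a3) - 1)⁻¹) a3 := by
  have hx : 0 < a3 / a2 + 4 * a3 := by positivity
  have hq := (exp_sub_one_pos (by positivity : 0 < 4 * a3)).ne'
  have hQ := (exp_sub_one_pos hx).ne'
  have hT := one_sub_exp_neg_pos hx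
  apply HasDerivAt.congr_deriv
  · simp only [logB]
    apply_rules (maxDepth := 200) [hasDerivAt_const, hasDerivAt_id', HasDerivAt.fun_add,
      HasDerivAt.fun_sub, HasDerivAt.fun_neg, HasDerivAt.fun_div, HasDerivAt.fun_mul,
      HasDerivAt.log, HasDerivAt.exp]
    all_goals exact ne_of_gt ‹_›
  · have hE := exp_ne_zero (a3 / a2 + 4 * a3)
    rw [exp_neg]
    generalize exp (4 * a3) = e at hq ⊢
    generalize exp (a3 / a2 + 4 * a3) = E at hE hQ ⊢
    field_simp
    ring

end Partials

theorem neg_three_le_log {a : ℝ} (ha : 0.06 ≤ a) : -3 ≤ log a := by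
  have h3 : (20 : ℝ) < exp 3 := by
    have h := exp_one_gt_d9
    calc (20 : ℝ) < 2.7182818283 ^ 3 := by norm_num
      _ < exp 1 ^ 3 := by gcongr
      _ = exp 3 := by rw [← exp_nat_mul]; norm_num
  rw [le_log_iff_exp_le (by linarith), exp_neg, inv_le_iff_one_le_mul₀ (exp_pos 3)]
  nlinarith

theorem coordinate_bounds {a : ℝ} (ha : a ∈ Icc (0.06 : ℝ) 0.6) :
    -3 ≤ log a ∧ log a ≤ 0 ∧ 0 < (exp (4 * a) - 1)⁻¹ ∧ (exp (4 * a) - 1)⁻¹ ≤ 25 / 6 ∧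
      -19 / 6 ≤ log (exp (4 * a) - 1) ∧ log (exp (4 * a) - 1) ≤ 12 / 5 := by
  obtain ⟨ha, ha'⟩ := ha
  have hy : 0 < 4 * a := by linarith
  have hq := mul_inv_exp_sub_one_le_one hy
  have hq0 := inv_pos.2 (exp_sub_one_pos hy)
  have hq' : (exp (4 * a) - 1)⁻¹ ≤ 25 / 6 := by nlinarith
  refine ⟨neg_three_le_log ha, log_nonpos (by linarith) (by linarith), hq0, hq', ?_, ?_⟩
  · linarith [one_sub_inv_exp_sub_one_le_log hy]
  · linarith [log_exp_sub_one_le hy]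

section Bounds

variable {a0 a1 a2 a3 : ℝ}

theorem abs_deriv_logB_a0_lt (h0 : a0 ∈ Icc (0.06 : ℝ) 0.6) (h1 : a1 ∈ Icc (0.06 : ℝ) 0.6)
    (h3 : a3 ∈ Icc (0.06 : ℝ) 0.6) (h4 : 1 - a0 - a1 - a2 - a3 ∈ Icc (0.06 : ℝ) 0.6) :
    |deriv (fun t => logB t a1 a2 a3) a0| < 30 := by
  obtain ⟨l0, l0', q0, q0', -, -⟩ := coordinate_bounds h0
  obtain ⟨-, -, -, -, e3, e3'⟩ := coordinate_bounds h3
  obtain ⟨l4, l4', -⟩ := coordinate_bounds h4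
  have p0 := mul_le_mul h1.2 q0' q0.le (by norm_num)
  have p0' := mul_pos (by linarith [h1.1] : (0:ℝ) < a1) q0
  rw [(hasDerivAt_logB_a0 (by linarith [h0.1]) (by linarith [h4.1])).deriv, abs_lt]
  constructor <;> linarith [h0.1, h0.2, h1.1, h1.2, h4.1, h4.2]

theorem abs_deriv_logB_a1_lt (h0 : a0 ∈ Icc (0.06 : ℝ) 0.6) (h1 : a1 ∈ Icc (0.06 : ℝ) 0.6)
    (h2 : a2 ∈ Icc (0.06 : ℝ) 0.6) (h3 : a3 ∈ Icc (0.06 : ℝ) 0.6)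
    (h4 : 1 - a0 - a1 - a2 - a3 ∈ Icc (0.06 : ℝ) 0.6) :
    |deriv (fun t => logB a0 t a2 a3) a1| < 30 := by
  obtain ⟨-, -, -, -, e0, e0'⟩ := coordinate_bounds h0
  obtain ⟨l1, l1', q1, q1', -, -⟩ := coordinate_bounds h1
  obtain ⟨-, -, -, -, e3, e3'⟩ := coordinate_bounds h3
  obtain ⟨l4, l4', -⟩ := coordinate_bounds h4
  have p1 := mul_le_mul h2.2 q1' q1.le (by norm_num)
  have p1' := mul_pos (by linarith [h2.1] : (0:ℝ) < a2) q1
  rw [(hasDerivAt_logB_a1 (by linarith [h1.1]) (by linarith [h4.1])).deriv, abs_lt]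
  constructor <;> linarith [h0.1, h0.2, h2.1, h2.2]

theorem abs_deriv_logB_a2_lt (h0 : a0 ∈ Icc (0.06 : ℝ) 0.6) (h1 : a1 ∈ Icc (0.06 : ℝ) 0.6)
    (h2 : a2 ∈ Icc (0.06 : ℝ) 0.6) (h3 : a3 ∈ Icc (0.06 : ℝ) 0.6)
    (h4 : 1 - a0 - a1 - a2 - a3 ∈ Icc (0.06 : ℝ) 0.6) :
    |deriv (fun t => logB a0 a1 t a3) a2| < 30 := by
  obtain ⟨-, -, -, -, e1, e1'⟩ := coordinate_bounds h1
  obtain ⟨l2, l2', q2, q2', -, -⟩ := coordinate_bounds h2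
  obtain ⟨-, -, -, -, e3, e3'⟩ := coordinate_bounds h3
  obtain ⟨l4, l4', -⟩ := coordinate_bounds h4
  have p2 := mul_le_mul h3.2 q2' q2.le (by norm_num)
  have p2' := mul_pos (by linarith [h3.1] : (0:ℝ) < a3) q2
  have ha2 : 0 < a2 := by linarith [h2.1]
  have ha3 : 0 < a3 := by linarith [h3.1]
  have hr : 0 < a3 / a2 := by positivity
  have hx : 0 < a3 / a2 + 4 * a3 := by positivity
  have hQ := mul_inv_exp_sub_one_le_one hx
  have hQ0 := inv_pos.2 (exp_sub_one_pos hx)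
  have hG := neg_inv_exp_sub_one_le_log_one_sub_exp_neg hx
  have hG' := log_one_sub_exp_neg_nonpos hx.le
  rw [(hasDerivAt_logB_a2 ha2 ha3 (by linarith [h4.1])).deriv, abs_lt]
  constructor <;> linarith [h0.1, h0.2, h1.1, h1.2, h3.2, mul_pos hr hQ0,
    mul_nonneg (sub_nonneg.2 h3.1) hQ0.le]

theorem abs_deriv_logB_a3_lt (h0 : a0 ∈ Icc (0.06 : ℝ) 0.6) (h1 : a1 ∈ Icc (0.06 : ℝ) 0.6)
    (h2 : a2 ∈ Icc (0.06 : ℝ) 0.6) (h3 : a3 ∈ Icc (0.06 : ℝ) 0.6)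
    (h4 : 1 - a0 - a1 - a2 - a3 ∈ Icc (0.06 : ℝ) 0.6) :
    |deriv (fun t => logB a0 a1 a2 t) a3| < 30 := by
  obtain ⟨-, -, -, -, e2, e2'⟩ := coordinate_bounds h2
  obtain ⟨l3, l3', q3, -, e3, e3'⟩ := coordinate_bounds h3
  obtain ⟨l4, l4', -⟩ := coordinate_bounds h4
  have ha2 : 0 < a2 := by linarith [h2.1]
  have ha3 : 0 < a3 := by linarith [h3.1]
  have hx : 0 < a3 / a2 + 4 * a3 := by positivity
  have hQ := mul_inv_exp_sub_one_le_one hx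
  have hQ0 := inv_pos.2 (exp_sub_one_pos hx)
  have ha4 : 0 < 1 - a0 - a1 - a2 - a3 := by linarith [h4.1]
  have hq := mul_inv_exp_sub_one_le_one (by positivity : 0 < 4 * a3)
  have hq4 : 4 * (1 - a0 - a1 - a2 - a3) * (exp (4 * a3) - 1)⁻¹ ≤
      (1 - a0 - a1 - a2 - a3) * a3⁻¹ :=
    calc 4 * (1 - a0 - a1 - a2 - a3) * (exp (4 * a3) - 1)⁻¹
        = (1 - a0 - a1 - a2 - a3) * a3⁻¹ * (4 * a3 * (exp (4 * a3) - 1)⁻¹) := by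
          field_simp
      _ ≤ (1 - a0 - a1 - a2 - a3) * a3⁻¹ :=
          mul_le_of_le_one_right (mul_nonneg ha4.le (inv_nonneg.2 ha3.le)) hq
  have hQ2 : (1 + 4 * a2) * (exp (a3 / a2 + 4 * a3) - 1)⁻¹ ≤ a2 * a3⁻¹ :=
    calc (1 + 4 * a2) * (exp (a3 / a2 + 4 * a3) - 1)⁻¹
        = a2 * a3⁻¹ * ((a3 / a2 + 4 * a3) * (exp (a3 / a2 + 4 * a3) - 1)⁻¹) := by
          field_simp
      _ ≤ a2 * a3⁻¹ := mul_le_of_le_one_right (by positivity) hQ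
  have hsum : (1 - a0 - a1 - a2 - a3) * a3⁻¹ + a2 * a3⁻¹ ≤ 14 := by
    rw [← add_mul, ← div_eq_mul_inv, div_le_iff₀ ha3]
    linarith [h0.1, h1.1, h3.1]
  rw [(hasDerivAt_logB_a3 ha2 ha3 ha4).deriv, abs_lt]
  constructor <;> linarith [h0.1, h0.2, h4.2, mul_pos ha4 q3,
    mul_pos (by positivity : 0 < 1 + 4 * a2) hQ0]

end Bounds

/-- At every point with `0.06 ≤ αᵢ ≤ 0.6` for `i = 0,1,2,3,4` (where
`α₄ = 1 - α₀ - α₁ - α₂ - α₃`), the logarithmic partial derivatives of `b` satisfy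
`|(1/b) · ∂b/∂αᵢ| < 30` for each `i = 0,1,2,3`. -/
theorem statement18 (a0 a1 a2 a3 : ℝ)
    (h0 : 0.06 ≤ a0 ∧ a0 ≤ 0.6) (h1 : 0.06 ≤ a1 ∧ a1 ≤ 0.6)
    (h2 : 0.06 ≤ a2 ∧ a2 ≤ 0.6) (h3 : 0.06 ≤ a3 ∧ a3 ≤ 0.6)
    (h4 : 0.06 ≤ 1 - a0 - a1 - a2 - a3 ∧ 1 - a0 - a1 - a2 - a3 ≤ 0.6) :
    |(bfun a0 a1 a2 a3)⁻¹ * deriv (fun t => bfun t a1 a2 a3) a0| < 30 ∧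
    |(bfun a0 a1 a2 a3)⁻¹ * deriv (fun t => bfun a0 t a2 a3) a1| < 30 ∧
    |(bfun a0 a1 a2 a3)⁻¹ * deriv (fun t => bfun a0 a1 t a3) a2| < 30 ∧
    |(bfun a0 a1 a2 a3)⁻¹ * deriv (fun t => bfun a0 a1 a2 t) a3| < 30 := by
  obtain ⟨p0, p1, p2, p3, p4⟩ :
      0 < a0 ∧ 0 < a1 ∧ 0 < a2 ∧ 0 < a3 ∧ 0 < 1 - a0 - a1 - a2 - a3 := by
    refine ⟨?_, ?_, ?_, ?_, ?_⟩ <;> linarith [h0.1, h1.1, h2.1, h3.1, h4.1]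
  refine ⟨?_, ?_, ?_, ?_⟩
  · rw [inv_mul_deriv_eq_deriv_of_eventuallyEq_exp (f := fun t => bfun t a1 a2 a3)
      (hasDerivAt_logB_a0 p0 p4).differentiableAt]
    · exact abs_deriv_logB_a0_lt h0 h1 h3 h4
    filter_upwards [Ioo_mem_nhds p0 (by linarith : a0 < 1 - a1 - a2 - a3)] with t ht
    exact bfun_eq_exp_logB ht.1 p1 p2 p3 (by linarith [ht.2])
  · rw [inv_mul_deriv_eq_deriv_of_eventuallyEq_exp (f := fun t => bfun a0 t a2 a3)
      (hasDerivAt_logB_a1 p1 p4).differentiableAt]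
    · exact abs_deriv_logB_a1_lt h0 h1 h2 h3 h4
    filter_upwards [Ioo_mem_nhds p1 (by linarith : a1 < 1 - a0 - a2 - a3)] with t ht
    exact bfun_eq_exp_logB p0 ht.1 p2 p3 (by linarith [ht.2])
  · rw [inv_mul_deriv_eq_deriv_of_eventuallyEq_exp (f := fun t => bfun a0 a1 t a3)
      (hasDerivAt_logB_a2 p2 p3 p4).differentiableAt]
    · exact abs_deriv_logB_a2_lt h0 h1 h2 h3 h4
    filter_upwards [Ioo_mem_nhds p2 (by linarith : a2 < 1 - a0 - a1 - a3)] with t ht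
    exact bfun_eq_exp_logB p0 p1 ht.1 p3 (by linarith [ht.2])
  · rw [inv_mul_deriv_eq_deriv_of_eventuallyEq_exp (f := fun t => bfun a0 a1 a2 t)
      (hasDerivAt_logB_a3 p2 p3 p4).differentiableAt]
    · exact abs_deriv_logB_a3_lt h0 h1 h2 h3 h4
    filter_upwards [Ioo_mem_nhds p3 (by linarith : a3 < 1 - a0 - a1 - a2)] with t ht
    exact bfun_eq_exp_logB p0 p1 p2 ht.1 (by linarith [ht.2])
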